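/- arXiv:2101.09080 — 7 statements merged into one kernel-verified Lean document; each statement's English description precedes it below -/
import Mathlib

section
/- Let b, d, Δ be integers with 2 ≤ b ≤ d−1 ≤ Δ−1, and set δ := Δ − b + 1. Let x_1, …, x_d ∈ [0,1] be real numbers with ∑_{j=1}^d x_j ≥ b. Then at least b−1 of the x_j satisfy x_j ≥ 2/(δ+1), and moreover there exists an index j, distinct from those b−1 indices, with x_j ≥ 1/δ. Equivalently: the set {j : x_j ≥ 2/(δ+1)} has cardinality at least b−1, and the set {j : x_j ≥ 1/δ} has cardinality at least b. -/
lemma aux_count {d : ℕ} (x : Fin d → ℝ) (hx : ∀ j, x j ∈ Set.Icc (0 : ℝ) 1)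
    (t : ℝ) (ht1 : t ≤ 1) (m : ℕ) (hm : m < d)
    (hcard : (Finset.univ.filter (fun j => t ≤ x j)).card ≤ m) :
    ∑ j, x j < (m : ℝ) + ((d : ℝ) - m) * t := by
  classical
  set S := Finset.univ.filter (fun j : Fin d => t ≤ x j) with hS
  have hcompl : Sᶜ = Finset.univ.filter (fun j : Fin d => ¬ t ≤ x j) := by
    ext j; simp [hS]
  have hcardc : Sᶜ.card = d - S.card := by
    rw [Finset.card_compl]; simp
  have hne : Sᶜ.Nonempty := by
    rw [← Finset.card_pos, hcardc]
    omega
  have hsplit : ∑ j, x j = ∑ j ∈ S, x j + ∑ j ∈ Sᶜ, x j := by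
    rw [Finset.sum_add_sum_compl]
  have h1 : ∑ j ∈ S, x j ≤ (S.card : ℝ) := by
    calc ∑ j ∈ S, x j ≤ ∑ j ∈ S, (1 : ℝ) :=
          Finset.sum_le_sum (fun j _ => (hx j).2)
      _ = S.card := by simp
  have h2 : ∑ j ∈ Sᶜ, x j < (Sᶜ.card : ℝ) * t := by
    calc ∑ j ∈ Sᶜ, x j < ∑ j ∈ Sᶜ, t := by
          apply Finset.sum_lt_sum_of_nonempty hne
          intro j hj
          rw [hcompl, Finset.mem_filter] at hj
          exact lt_of_not_ge hj.2
      _ = (Sᶜ.card : ℝ) * t := by rw [Finset.sum_const, nsmul_eq_mul]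
  have hsc : (S.card : ℝ) ≤ m := by exact_mod_cast hcard
  have hsd : S.card ≤ d := S.card_le_univ.trans (by simp)
  have hcc : (Sᶜ.card : ℝ) = (d : ℝ) - S.card := by
    rw [hcardc]; push_cast [hsd]; ring
  have ht0' : ∑ j, x j < (S.card : ℝ) + ((d : ℝ) - S.card) * t := by
    rw [hsplit]; rw [hcc] at h2; linarith
  nlinarith [ht0', hsc]

/-- Lemma 2: if `2 ≤ b ≤ d-1 ≤ Δ-1` and reals `x₁,…,x_d ∈ [0,1]` satisfy
`∑ x_j ≥ b`, then at least `b-1` of the `x_j` satisfy `x_j ≥ 2/(δ+1)` and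
at least `b` of the `x_j` satisfy `x_j ≥ 1/δ`, where `δ = Δ - b + 1`. -/
theorem stmt_1 (b d Δ : ℕ) (hb : 2 ≤ b) (hbd : b + 1 ≤ d) (hdΔ : d ≤ Δ)
    (x : Fin d → ℝ) (hx : ∀ j, x j ∈ Set.Icc (0 : ℝ) 1)
    (hsum : (b : ℝ) ≤ ∑ j, x j) :
    b - 1 ≤ (Finset.univ.filter
          (fun j : Fin d => 2 / (((Δ - b + 1 : ℕ) : ℝ) + 1) ≤ x j)).card ∧
    b ≤ (Finset.univ.filter
          (fun j : Fin d => 1 / ((Δ - b + 1 : ℕ) : ℝ) ≤ x j)).card := by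
  have hbΔ : b ≤ Δ := by omega
  have hδcast : ((Δ - b + 1 : ℕ) : ℝ) = (Δ : ℝ) - b + 1 := by
    push_cast [Nat.cast_sub hbΔ]; ring
  have hδpos : (2 : ℝ) ≤ ((Δ - b + 1 : ℕ) : ℝ) := by
    rw [hδcast]
    have : (b : ℝ) + 1 ≤ d := by exact_mod_cast hbd
    have : (d : ℝ) ≤ Δ := by exact_mod_cast hdΔ
    linarith
  set δ : ℝ := ((Δ - b + 1 : ℕ) : ℝ) with hδ
  have hd : (b : ℝ) + 1 ≤ d := by exact_mod_cast hbd
  have hΔ : (d : ℝ) ≤ Δ := by exact_mod_cast hdΔ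
  have hb2 : (2 : ℝ) ≤ b := by exact_mod_cast hb
  constructor
  · by_contra h
    push_neg at h
    have hcard : (Finset.univ.filter
        (fun j : Fin d => 2 / (δ + 1) ≤ x j)).card ≤ b - 2 := by omega
    have hm : b - 2 < d := by omega
    have ht1 : 2 / (δ + 1) ≤ 1 := by
      rw [div_le_one (by linarith)]; linarith
    have key := aux_count x hx (2 / (δ + 1)) ht1 (b - 2) hm hcard
    have hbc : ((b - 2 : ℕ) : ℝ) = (b : ℝ) - 2 := by
      push_cast [Nat.cast_sub hb]; ring
    rw [hbc] at key
    -- sum < (b-2) + (d - b + 2) * 2/(δ+1) ≤ b since d - b + 2 ≤ δ + 1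
    have h1 : (d : ℝ) - b + 2 ≤ δ + 1 := by
      show (d : ℝ) - b + 2 ≤ δ + 1; rw [hδcast]; linarith
    have h2 : ((d : ℝ) - ((b : ℝ) - 2)) * (2 / (δ + 1)) ≤ 2 := by
      have h3 := mul_le_mul_of_nonneg_right (show (d:ℝ)-((b:ℝ)-2) ≤ δ+1 by linarith)
        (show (0:ℝ) ≤ 2/(δ+1) by positivity)
      rw [show (δ+1)*(2/(δ+1)) = 2 by field_simp] at h3
      exact h3
    linarith
  · by_contra h
    push_neg at h
    have hcard : (Finset.univ.filter
        (fun j : Fin d => 1 / δ ≤ x j)).card ≤ b - 1 := by omega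
    have hm : b - 1 < d := by omega
    have ht1 : 1 / δ ≤ 1 := by
      rw [div_le_one (by linarith)]; linarith
    have key := aux_count x hx (1 / δ) ht1 (b - 1) hm hcard
    have hbc : ((b - 1 : ℕ) : ℝ) = (b : ℝ) - 1 := by
      push_cast [Nat.cast_sub (by omega : 1 ≤ b)]; ring
    rw [hbc] at key
    have h1 : (d : ℝ) - b + 1 ≤ δ := by
      show (d : ℝ) - b + 1 ≤ δ; rw [hδcast]; linarith
    have h2 : ((d : ℝ) - ((b : ℝ) - 1)) * (1 / δ) ≤ 1 := by
      have h3 := mul_le_mul_of_nonneg_right (show (d:ℝ)-((b:ℝ)-1) ≤ δ by linarith)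
        (show (0:ℝ) ≤ 1/δ by positivity)
      rw [show δ*(1/δ) = 1 by field_simp] at h3
      exact h3
    linarith
end

section
/- Let b ≥ 2 and ℓ ≥ 1 be integers, δ ≥ 2 a real number, k ≥ 2 an integer, and ε ∈ (0,1). Set a_{k,ε} := (k(1−ε) + (δ−1)(1−ε^k))/2 and α := ((b−1)·δ·ε^k / (6ℓ)) · exp(a_{k,ε}). Let x*_1, …, x*_m ∈ [0,1] be reals and let Opt* := ∑_{j=1}^m x*_j. Define C₁ := {j ∈ [m] : x*_j ≥ 2/(δ+1)} and C₂ := {j ∈ [m] : 1/δ ≤ x*_j < 2/(δ+1)}. If |C₁| ≥ α · Opt*, then |C₁| + |C₂| ≤ (1 − ((b−1)·ε^k / (18ℓ)) · exp(a_{k,ε})) · δ · Opt*. -/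
/-- Theorem 5 (deterministic threshold case): if `|C₁| ≥ α·Opt*` then
`|C₁| + |C₂| ≤ (1 - ((b-1)ε^k/(18ℓ))·exp(a_{k,ε}))·δ·Opt*`. -/
theorem stmt_2 (b ℓ k m : ℕ) (hb : 2 ≤ b) (hℓ : 1 ≤ ℓ) (hk : 2 ≤ k)
    (δ : ℝ) (hδ : 2 ≤ δ) (ε : ℝ) (hε : ε ∈ Set.Ioo (0 : ℝ) 1)
    (x : Fin m → ℝ) (hx : ∀ j, x j ∈ Set.Icc (0 : ℝ) 1)
    (a : ℝ) (ha : a = ((k : ℝ) * (1 - ε) + (δ - 1) * (1 - ε ^ k)) / 2)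
    (α : ℝ) (hα : α = ((b : ℝ) - 1) * δ * ε ^ k / (6 * (ℓ : ℝ)) * Real.exp a)
    (hC1 : α * (∑ j, x j) ≤
      ((Finset.univ.filter (fun j : Fin m => 2 / (δ + 1) ≤ x j)).card : ℝ)) :
    ((Finset.univ.filter (fun j : Fin m => 2 / (δ + 1) ≤ x j)).card : ℝ)
      + ((Finset.univ.filter
          (fun j : Fin m => 1 / δ ≤ x j ∧ x j < 2 / (δ + 1))).card : ℝ)
      ≤ (1 - ((b : ℝ) - 1) * ε ^ k / (18 * (ℓ : ℝ)) * Real.exp a) * δ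
          * (∑ j, x j) := by
  obtain ⟨hε0, hε1⟩ := hε
  set C1 := Finset.univ.filter (fun j : Fin m => 2 / (δ + 1) ≤ x j) with hC1def
  set C2 := Finset.univ.filter (fun j : Fin m => 1 / δ ≤ x j ∧ x j < 2 / (δ + 1)) with hC2def
  set S := ∑ j, x j with hSdef
  have hδ0 : (0:ℝ) < δ := by linarith
  have hδ1 : (0:ℝ) < δ + 1 := by linarith
  have hL : (1:ℝ) ≤ (ℓ:ℝ) := by exact_mod_cast hℓ
  have hL0 : (0:ℝ) < (ℓ:ℝ) := by linarith
  have hE : (0:ℝ) < Real.exp a := Real.exp_pos a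
  have hP : (0:ℝ) < ε ^ k := pow_pos hε0 k
  have hB : (1:ℝ) ≤ (b:ℝ) - 1 := by
    have : (2:ℝ) ≤ (b:ℝ) := by exact_mod_cast hb
    linarith
  have hS0 : (0:ℝ) ≤ S := Finset.sum_nonneg fun j _ => (hx j).1
  -- sum bounds on C1 and C2
  have h1 : (C1.card : ℝ) * (2 / (δ + 1)) ≤ ∑ j ∈ C1, x j := by
    have := Finset.card_nsmul_le_sum C1 x (2 / (δ + 1))
      (fun j hj => (Finset.mem_filter.mp hj).2)
    simpa [nsmul_eq_mul] using this
  have h2 : (C2.card : ℝ) * (1 / δ) ≤ ∑ j ∈ C2, x j := by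
    have := Finset.card_nsmul_le_sum C2 x (1 / δ)
      (fun j hj => (Finset.mem_filter.mp hj).2.1)
    simpa [nsmul_eq_mul] using this
  have hdisj : Disjoint C1 C2 := by
    rw [Finset.disjoint_left]
    intro j hj1 hj2
    exact absurd (Finset.mem_filter.mp hj1).2
      (not_le.mpr (Finset.mem_filter.mp hj2).2.2)
  have hsub : (∑ j ∈ C1, x j) + (∑ j ∈ C2, x j) ≤ S := by
    rw [← Finset.sum_union hdisj]
    exact Finset.sum_le_sum_of_subset_of_nonneg (Finset.subset_univ _)
      (fun j _ _ => (hx j).1)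
  have hA : (C1.card : ℝ) * (2 / (δ + 1)) + (C2.card : ℝ) * (1 / δ) ≤ S := by
    linarith
  -- clear denominators in hA : multiply by δ(δ+1)
  have hA' : (C1.card : ℝ) * 2 * δ + (C2.card : ℝ) * (δ + 1) ≤ S * δ * (δ + 1) := by
    have h := mul_le_mul_of_nonneg_right hA (le_of_lt (mul_pos hδ0 hδ1))
    have e1 : (C1.card : ℝ) * (2 / (δ + 1)) * (δ * (δ + 1)) = (C1.card : ℝ) * 2 * δ := by
      field_simp; try ring
    have e2 : (C2.card : ℝ) * (1 / δ) * (δ * (δ + 1)) = (C2.card : ℝ) * (δ + 1) := by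
      field_simp; try ring
    rw [add_mul, e1, e2] at h
    linarith [h]
  -- clear denominators in hC1
  have hC1' : ((b:ℝ) - 1) * δ * ε ^ k * Real.exp a * S ≤ 6 * (ℓ:ℝ) * (C1.card : ℝ) := by
    have h := mul_le_mul_of_nonneg_right hC1 (by linarith : (0:ℝ) ≤ 6 * (ℓ:ℝ))
    rw [hα] at h
    have e : ((b:ℝ) - 1) * δ * ε ^ k / (6 * (ℓ:ℝ)) * Real.exp a * S * (6 * (ℓ:ℝ))
        = ((b:ℝ) - 1) * δ * ε ^ k * Real.exp a * S := by
      field_simp; try ring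
    rw [e] at h
    linarith [h]
  -- final goal via multiplying by 18ℓ(δ+1)
  have key : 0 ≤ ((1 - ((b:ℝ) - 1) * ε ^ k / (18 * (ℓ:ℝ)) * Real.exp a) * δ * S
      - ((C1.card : ℝ) + (C2.card : ℝ))) * (18 * (ℓ:ℝ) * (δ + 1)) := by
    have e : (1 - ((b:ℝ) - 1) * ε ^ k / (18 * (ℓ:ℝ)) * Real.exp a) * δ * S
        * (18 * (ℓ:ℝ) * (δ + 1))
        = (18 * (ℓ:ℝ) - ((b:ℝ) - 1) * ε ^ k * Real.exp a) * δ * S * (δ + 1) := by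
      field_simp; try ring
    rw [sub_mul, e]
    have hBPES : 0 ≤ ((b:ℝ) - 1) * ε ^ k * Real.exp a * S :=
      mul_nonneg (mul_nonneg (mul_nonneg (by linarith) hP.le) hE.le) hS0
    have hC1'' := mul_le_mul_of_nonneg_right hC1' (by linarith : (0:ℝ) ≤ 3 * (δ - 1))
    have hA'' := mul_le_mul_of_nonneg_left hA' (by linarith : (0:ℝ) ≤ 18 * (ℓ:ℝ))
    have hfin : 0 ≤ (2 * δ - 4) * (((b:ℝ) - 1) * ε ^ k * Real.exp a * S * δ) :=
      mul_nonneg (by linarith) (mul_nonneg hBPES hδ0.le)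
    nlinarith [hA'', hC1'', hfin]
  have hpos : (0:ℝ) < 18 * (ℓ:ℝ) * (δ + 1) := by positivity
  have h3 := (mul_nonneg_iff_of_pos_right hpos).mp key
  linarith
end

section
/- Let H = (V, 𝓔) be a finite hypergraph with n := |V| vertices, edges E_1, …, E_m, maximum vertex degree Δ, and maximum edge size ℓ. Let b_1, …, b_n be integers with 2 ≤ b_i ≤ d(v_i) − 1 for every vertex v_i, where d(v_i) is the degree of v_i, let b := min_i b_i and δ := Δ − b + 1. Let x_1, …, x_m ∈ [0,1] be a feasible fractional set multicover, i.e. ∑_{j : v_i ∈ E_j} x_j ≥ b_i for every i ∈ [n]. Define C₁ := {j ∈ [m] : x_j ≥ 2/(δ+1)}. Then every vertex v_i is incident to at least b_i − 1 edges of C₁, and consequently (b−1)·n ≤ ℓ·|C₁|, i.e. |C₁| ≥ (b−1)n/ℓ. -/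
/-- For a hypergraph with max degree `Δ`, max edge size `ℓ`, requirements
`2 ≤ bᵢ ≤ d(vᵢ) - 1`, `b = min bᵢ`, `δ = Δ - b + 1`, and a feasible fractional
multicover `x`, every vertex `vᵢ` is incident to at least `bᵢ - 1` edges of
`C₁ = {j : x_j ≥ 2/(δ+1)}`, and consequently `(b-1)·n ≤ ℓ·|C₁|`. -/
theorem stmt_3 {V : Type*} [Fintype V] [DecidableEq V] (m : ℕ)
    (E : Fin m → Finset V) (Δ ℓ : ℕ)
    (hΔ : ∀ v : V, (Finset.univ.filter (fun j : Fin m => v ∈ E j)).card ≤ Δ)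
    (hℓ : ∀ j : Fin m, (E j).card ≤ ℓ)
    (bv : V → ℕ) (hb : ∀ v, 2 ≤ bv v)
    (hbd : ∀ v : V,
      bv v + 1 ≤ (Finset.univ.filter (fun j : Fin m => v ∈ E j)).card)
    (b : ℕ) (hbmin : ∀ v, b ≤ bv v) (hbattain : ∃ v, bv v = b)
    (x : Fin m → ℝ) (hx : ∀ j, x j ∈ Set.Icc (0 : ℝ) 1)
    (hfeas : ∀ v : V, (bv v : ℝ) ≤
      ∑ j ∈ Finset.univ.filter (fun j : Fin m => v ∈ E j), x j) :
    (∀ v : V, bv v - 1 ≤ (Finset.univ.filter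
        (fun j : Fin m =>
          v ∈ E j ∧ 2 / (((Δ - b + 1 : ℕ) : ℝ) + 1) ≤ x j)).card) ∧
    (b - 1) * Fintype.card V ≤
      ℓ * (Finset.univ.filter
        (fun j : Fin m => 2 / (((Δ - b + 1 : ℕ) : ℝ) + 1) ≤ x j)).card := by
  classical
  obtain ⟨v₀, hv₀⟩ := hbattain
  have hbΔ : b + 1 ≤ Δ := by
    have h1 := hbd v₀
    have h2 := hΔ v₀
    omega
  set D : ℝ := ((Δ - b + 1 : ℕ) : ℝ) + 1 with hDdef
  have hDval : D = (Δ : ℝ) - b + 2 := by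
    rw [hDdef, Nat.cast_add, Nat.cast_sub (by omega : b ≤ Δ)]
    push_cast; ring
  have hD3 : (3 : ℝ) ≤ D := by
    have : (b : ℝ) + 1 ≤ (Δ : ℝ) := by exact_mod_cast hbΔ
    rw [hDval]; linarith
  have hDpos : (0 : ℝ) < D := by linarith
  set t : ℝ := 2 / D with htdef
  have htD : t * D = 2 := div_mul_cancel₀ 2 (ne_of_gt hDpos)
  have key : ∀ v : V, bv v - 1 ≤ (Finset.univ.filter
      (fun j : Fin m => v ∈ E j ∧ t ≤ x j)).card := by
    intro v
    by_contra hcon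
    push_neg at hcon
    set S := Finset.univ.filter (fun j : Fin m => v ∈ E j) with hS
    set B := Finset.univ.filter (fun j : Fin m => v ∈ E j ∧ t ≤ x j) with hB
    have hBS : B ⊆ S := by
      intro j hj
      simp only [hS, hB, Finset.mem_filter, Finset.mem_univ, true_and] at hj ⊢
      exact hj.1
    have hbv2 := hb v
    have hcB : B.card ≤ bv v - 2 := by omega
    have hcS : bv v + 1 ≤ S.card := hbd v
    have hSΔ : S.card ≤ Δ := hΔ v
    have hne : (S \ B).Nonempty := by
      rw [← Finset.card_pos, Finset.card_sdiff_of_subset hBS]; omega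
    have hsum1 : ∑ j ∈ B, x j ≤ (B.card : ℝ) := by
      calc ∑ j ∈ B, x j ≤ ∑ _j ∈ B, (1 : ℝ) :=
            Finset.sum_le_sum (fun j _ => (hx j).2)
        _ = B.card := by simp
    have hsum2 : ∑ j ∈ S \ B, x j < ((S \ B).card : ℝ) * t := by
      calc ∑ j ∈ S \ B, x j < ∑ _j ∈ S \ B, t := by
            apply Finset.sum_lt_sum_of_nonempty hne
            intro j hj
            rw [Finset.mem_sdiff] at hj
            obtain ⟨hjS, hjB⟩ := hj
            simp only [hS, Finset.mem_filter, Finset.mem_univ, true_and] at hjS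
            simp only [hB, Finset.mem_filter, Finset.mem_univ, true_and] at hjB
            push_neg at hjB
            exact hjB hjS
        _ = ((S \ B).card : ℝ) * t := by simp [mul_comm]
    have hsumS : (bv v : ℝ) ≤ ∑ j ∈ S, x j := hfeas v
    have hsplit : ∑ j ∈ S \ B, x j + ∑ j ∈ B, x j = ∑ j ∈ S, x j :=
      Finset.sum_sdiff hBS
    have hcard : ((S \ B).card : ℝ) = (S.card : ℝ) - B.card := by
      rw [Finset.card_sdiff_of_subset hBS, Nat.cast_sub (Finset.card_le_card hBS)]
    have hcB' : (B.card : ℝ) ≤ (bv v : ℝ) - 2 := by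
      have : (B.card : ℝ) ≤ ((bv v - 2 : ℕ) : ℝ) := by exact_mod_cast hcB
      rwa [Nat.cast_sub (by omega : 2 ≤ bv v)] at this
    have hcS' : (bv v : ℝ) + 1 ≤ (S.card : ℝ) := by exact_mod_cast hcS
    have hSΔ' : (S.card : ℝ) ≤ (Δ : ℝ) := by exact_mod_cast hSΔ
    have hbbv : (b : ℝ) ≤ (bv v : ℝ) := by exact_mod_cast hbmin v
    have htpos : 0 < t := div_pos (by norm_num) hDpos
    nlinarith [mul_le_mul_of_nonneg_right hcB' (le_of_lt hDpos),
      mul_nonneg (sub_nonneg.mpr hcB') (by linarith : (0:ℝ) ≤ D - 2),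
      mul_le_mul_of_nonneg_right hSΔ' (le_of_lt htpos)]
  refine ⟨key, ?_⟩
  have hdc : ∑ v : V, (Finset.univ.filter
      (fun j : Fin m => v ∈ E j ∧ t ≤ x j)).card
      = ∑ j ∈ Finset.univ.filter (fun j : Fin m => t ≤ x j), (E j).card := by
    simp only [Finset.card_filter]
    rw [Finset.sum_comm, Finset.sum_filter]
    apply Finset.sum_congr rfl
    intro j _
    by_cases hP : t ≤ x j
    · simp only [hP, and_true, if_true]
      rw [← Finset.card_filter]
      congr 1
      ext v
      simp
    · simp [hP]
  calc (b - 1) * Fintype.card V = ∑ _v : V, (b - 1) := by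
        simp [mul_comm]
    _ ≤ ∑ v : V, (bv v - 1) :=
        Finset.sum_le_sum (fun v _ => by have := hbmin v; omega)
    _ ≤ ∑ v : V, (Finset.univ.filter
          (fun j : Fin m => v ∈ E j ∧ t ≤ x j)).card :=
        Finset.sum_le_sum (fun v _ => key v)
    _ = ∑ j ∈ Finset.univ.filter (fun j : Fin m => t ≤ x j), (E j).card := hdc
    _ ≤ ∑ _j ∈ Finset.univ.filter (fun j : Fin m => t ≤ x j), ℓ :=
        Finset.sum_le_sum (fun j _ => hℓ j)
    _ = ℓ * (Finset.univ.filter (fun j : Fin m => t ≤ x j)).card := by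
        simp [mul_comm]
end

section
/- Let δ ≥ 2 be a real number, k ≥ 2 an integer, and ε a real with (δ−1)/(2δ) ≤ ε < 1. Set λ₀ := (1−ε)δ and a_{k,ε} := (k(1−ε) + (δ−1)(1−ε^k))/2. Let C₂ and C₃ be disjoint finite index sets and let x_j ∈ [0,1] for each j ∈ C₂ ∪ C₃, with x_j < 2/(δ+1) for j ∈ C₂ and x_j < 1/δ for j ∈ C₃. Assume ∑_{j ∈ C₂} x_j ≥ 1/δ and ∑_{j ∈ C₂ ∪ C₃} x_j ≥ 1. Then ∏_{j ∈ C₂} (1 − λ₀ x_j)^k · ∏_{j ∈ C₃} (1 − (1−ε^k)·δ·x_j) ≤ exp(−2·a_{k,ε}). -/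
/-- Key inequality for the probability that a vertex stays uncovered:
`∏_{j∈C₂} (1-λ₀x_j)^k · ∏_{j∈C₃} (1-(1-ε^k)δx_j) ≤ exp(-2a_{k,ε})`. -/
theorem stmt_4 {ι : Type*} [DecidableEq ι] (δ : ℝ) (hδ : 2 ≤ δ) (k : ℕ) (hk : 2 ≤ k)
    (ε : ℝ) (hε1 : (δ - 1) / (2 * δ) ≤ ε) (hε2 : ε < 1)
    (C₂ C₃ : Finset ι) (hdisj : Disjoint C₂ C₃)
    (x : ι → ℝ) (hx : ∀ j ∈ C₂ ∪ C₃, x j ∈ Set.Icc (0 : ℝ) 1)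
    (hx2 : ∀ j ∈ C₂, x j < 2 / (δ + 1)) (hx3 : ∀ j ∈ C₃, x j < 1 / δ)
    (hs2 : 1 / δ ≤ ∑ j ∈ C₂, x j) (hs23 : 1 ≤ ∑ j ∈ C₂ ∪ C₃, x j) :
    (∏ j ∈ C₂, (1 - (1 - ε) * δ * x j) ^ k)
      * ∏ j ∈ C₃, (1 - (1 - ε ^ k) * δ * x j)
      ≤ Real.exp (-2 * (((k : ℝ) * (1 - ε) + (δ - 1) * (1 - ε ^ k)) / 2)) := by
  have hδ0 : (0:ℝ) < δ := by linarith
  have hε0 : 0 ≤ ε := le_trans (div_nonneg (by linarith) (by linarith)) hε1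
  have hεk1 : ε ^ k ≤ 1 := pow_le_one₀ hε0 hε2.le
  have hεk0 : 0 ≤ ε ^ k := pow_nonneg hε0 k
  have hk1 : (1:ℝ) ≤ k := by exact_mod_cast Nat.one_le_of_lt hk
  -- 1 - ε^k ≤ k (1 - ε)
  have hgeom : 1 - ε ^ k ≤ (k : ℝ) * (1 - ε) := by
    have := one_add_mul_le_pow (a := ε - 1) (by linarith) k
    have h : (1 + (ε - 1)) ^ k = ε ^ k := by ring_nf
    nlinarith [this]
  -- 1 - ε ≤ (δ+1)/(2δ)
  have hone_sub : (1 - ε) * (2 * δ) ≤ δ + 1 := by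
    have := (div_le_iff₀ (by linarith : (0:ℝ) < 2 * δ)).mp hε1
    linarith
  -- nonnegativity and per-factor exp bounds
  have h2each : ∀ j ∈ C₂, (0:ℝ) ≤ 1 - (1 - ε) * δ * x j ∧
      (1 - (1 - ε) * δ * x j) ^ k ≤ Real.exp (-((k : ℝ) * ((1 - ε) * δ * x j))) := by
    intro j hj
    obtain ⟨hx0, hx1⟩ := hx j (Finset.mem_union_left _ hj)
    have hlt := hx2 j hj
    have hxlt : x j * (δ + 1) < 2 :=
      (lt_div_iff₀ (by linarith : (0:ℝ) < δ + 1)).mp hlt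
    have hnn : (0:ℝ) ≤ 1 - (1 - ε) * δ * x j := by nlinarith
    refine ⟨hnn, ?_⟩
    calc (1 - (1 - ε) * δ * x j) ^ k
        ≤ Real.exp (-((1 - ε) * δ * x j)) ^ k := by
          apply pow_le_pow_left₀ hnn
          linarith [Real.add_one_le_exp (-((1 - ε) * δ * x j))]
      _ = Real.exp (-((k : ℝ) * ((1 - ε) * δ * x j))) := by
          rw [← Real.exp_nat_mul]; ring_nf
  have h3each : ∀ j ∈ C₃, (0:ℝ) ≤ 1 - (1 - ε ^ k) * δ * x j ∧
      (1 - (1 - ε ^ k) * δ * x j) ≤ Real.exp (-((1 - ε ^ k) * δ * x j)) := by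
    intro j hj
    obtain ⟨hx0, hx1⟩ := hx j (Finset.mem_union_right _ hj)
    have hlt := hx3 j hj
    have hxd : x j * δ < 1 := (lt_div_iff₀ hδ0).mp (by simpa using hlt)
    have hnn : (0:ℝ) ≤ 1 - (1 - ε ^ k) * δ * x j := by nlinarith
    exact ⟨hnn, by linarith [Real.add_one_le_exp (-((1 - ε ^ k) * δ * x j))]⟩
  have hp2 : (∏ j ∈ C₂, (1 - (1 - ε) * δ * x j) ^ k)
      ≤ ∏ j ∈ C₂, Real.exp (-((k : ℝ) * ((1 - ε) * δ * x j))) := by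
    apply Finset.prod_le_prod
    · intro j hj; exact pow_nonneg (h2each j hj).1 k
    · intro j hj; exact (h2each j hj).2
  have hp3 : (∏ j ∈ C₃, (1 - (1 - ε ^ k) * δ * x j))
      ≤ ∏ j ∈ C₃, Real.exp (-((1 - ε ^ k) * δ * x j)) := by
    apply Finset.prod_le_prod
    · intro j hj; exact (h3each j hj).1
    · intro j hj; exact (h3each j hj).2
  have hmul : (∏ j ∈ C₂, (1 - (1 - ε) * δ * x j) ^ k)
      * ∏ j ∈ C₃, (1 - (1 - ε ^ k) * δ * x j)
      ≤ (∏ j ∈ C₂, Real.exp (-((k : ℝ) * ((1 - ε) * δ * x j))))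
        * ∏ j ∈ C₃, Real.exp (-((1 - ε ^ k) * δ * x j)) := by
    apply mul_le_mul hp2 hp3
    · exact Finset.prod_nonneg fun j hj => (h3each j hj).1
    · exact Finset.prod_nonneg fun j hj => Real.exp_nonneg _
  refine hmul.trans ?_
  rw [← Real.exp_sum, ← Real.exp_sum, ← Real.exp_add, Real.exp_le_exp]
  have hS3nn : 0 ≤ ∑ j ∈ C₃, x j :=
    Finset.sum_nonneg fun j hj => (hx j (Finset.mem_union_right _ hj)).1
  have hsum : ∑ j ∈ C₂ ∪ C₃, x j = ∑ j ∈ C₂, x j + ∑ j ∈ C₃, x j := Finset.sum_union hdisj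
  have hS2 : ∑ j ∈ C₂, -((k : ℝ) * ((1 - ε) * δ * x j))
      = -((k : ℝ) * (1 - ε) * δ * ∑ j ∈ C₂, x j) := by
    rw [Finset.mul_sum, ← Finset.sum_neg_distrib]
    exact Finset.sum_congr rfl fun j _ => by ring
  have hS3 : ∑ j ∈ C₃, -((1 - ε ^ k) * δ * x j)
      = -((1 - ε ^ k) * δ * ∑ j ∈ C₃, x j) := by
    rw [Finset.mul_sum, ← Finset.sum_neg_distrib]
  rw [hS2, hS3]
  have hδS2 : 1 ≤ δ * ∑ j ∈ C₂, x j := by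
    have := (div_le_iff₀ hδ0).mp hs2
    linarith [this]
  have hA : 0 ≤ ((k : ℝ) * (1 - ε) - (1 - ε ^ k)) * (δ * ∑ j ∈ C₂, x j - 1) :=
    mul_nonneg (by linarith) (by linarith)
  have hB : 0 ≤ (1 - ε ^ k) * δ * ((∑ j ∈ C₂, x j) + (∑ j ∈ C₃, x j) - 1) :=
    mul_nonneg (mul_nonneg (by linarith) (by linarith)) (by rw [hsum] at hs23; linarith)
  nlinarith [hA, hB]
end

section
/- Let δ ≥ 2 be a real number, k ≥ 2 an integer, and ε a real with (δ−1)/(2δ) ≤ ε ≤ ((δ−1)/(2δ))^{1/k}. Set λ₀ := (1−ε)δ and λ := (δ+1)/2. Let x_1, …, x_m ∈ [0,1] be reals and define C₁ := {j : x_j ≥ 2/(δ+1)}, C₂ := {j : 1/δ ≤ x_j < 2/(δ+1)}, C₃ := {j : 0 < x_j < 1/δ}. Then |C₁| + ∑_{j ∈ C₂} (1 − (1 − λ₀ x_j)^k) + ∑_{j ∈ C₃} (1−ε^k)·δ·x_j ≤ (1−ε^k)·δ·∑_{j=1}^m x_j. -/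
/-!
Each index `j` contributes at most `(1 - ε^k) δ x_j` to the left-hand side. On `C₃` this is an
equality. On `C₁` it holds because `ε^k ≤ (δ-1)/(2δ)` makes `(1 - ε^k) δ ≥ (δ+1)/2`. On `C₂`, put
`t := 1 - (1-ε) δ x_j`; the bounds on `x_j` and `ε` give `0 ≤ t ≤ ε ≤ 1`, and since
`(1 - t^k)/(1 - t) = ∑_{i<k} t^i` is increasing in `t`, `1 - t^k ≤ (1 - ε^k)/(1 - ε) · (1 - t)`.
-/

open Finset

theorem pow_le_of_le_rpow_one_div {ε b : ℝ} {k : ℕ} (hk : k ≠ 0) (hε : 0 ≤ ε) (hb : 0 ≤ b)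
    (h : ε ≤ b ^ ((1 : ℝ) / k)) : ε ^ k ≤ b := by
  calc ε ^ k ≤ (b ^ ((1 : ℝ) / k)) ^ k := pow_le_pow_left₀ hε h k
    _ = b := by rw [one_div, Real.rpow_inv_natCast_pow hb hk]

theorem one_sub_pow_le_of_one_sub_eq_mul {s t c : ℝ} (k : ℕ) (ht : 0 ≤ t) (hts : t ≤ s)
    (ht1 : t ≤ 1) (h : 1 - t = (1 - s) * c) : 1 - t ^ k ≤ (1 - s ^ k) * c := by
  calc 1 - t ^ k = (∑ i ∈ range k, t ^ i) * (1 - t) := (geom_sum_mul_neg t k).symm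
    _ ≤ (∑ i ∈ range k, s ^ i) * (1 - t) := by gcongr
    _ = (1 - s ^ k) * c := by rw [h, ← mul_assoc, geom_sum_mul_neg]

section Rounding

variable {δ ε x : ℝ} {k : ℕ}

theorem one_le_mul_of_two_div_le (hδ : 1 ≤ δ) (hεk : ε ^ k ≤ (δ - 1) / (2 * δ))
    (hx : 2 / (δ + 1) ≤ x) : 1 ≤ (1 - ε ^ k) * δ * x := by
  have hδ0 : 0 < δ := by linarith
  have hcoef : (δ + 1) / 2 ≤ (1 - ε ^ k) * δ := by
    rw [le_div_iff₀ (by positivity)] at hεk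
    linarith
  calc 1 = (δ + 1) / 2 * (2 / (δ + 1)) := by field_simp
    _ ≤ (1 - ε ^ k) * δ * x := mul_le_mul hcoef hx (by positivity) (by linarith)

theorem one_sub_pow_le_of_mem_Ico (hδ : 0 < δ) (hε1 : (δ - 1) / (2 * δ) ≤ ε) (hε : ε ≤ 1)
    (hlo : 1 / δ ≤ x) (hhi : x < 2 / (δ + 1)) :
    1 - (1 - (1 - ε) * δ * x) ^ k ≤ (1 - ε ^ k) * δ * x := by
  have hδx : 1 ≤ δ * x := by rwa [div_le_iff₀ hδ, mul_comm] at hlo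
  have hx2 : x * (δ + 1) < 2 := by rwa [lt_div_iff₀ (by linarith)] at hhi
  have hε' : (1 - ε) * (2 * δ) ≤ δ + 1 := by
    rw [div_le_iff₀ (by positivity)] at hε1
    linarith
  rw [mul_assoc (1 - ε ^ k)]
  refine one_sub_pow_le_of_one_sub_eq_mul k ?_ ?_ ?_ (by ring)
  · nlinarith [mul_le_mul_of_nonneg_left hx2.le (sub_nonneg.2 hε)]
  · nlinarith [mul_le_mul_of_nonneg_left hδx (sub_nonneg.2 hε)]
  · nlinarith [mul_nonneg (sub_nonneg.2 hε) (by linarith : 0 ≤ δ * x)]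

theorem rounding_contribution_le (hδ : 1 ≤ δ) (hε1 : (δ - 1) / (2 * δ) ≤ ε) (hε : ε ≤ 1)
    (hεk : ε ^ k ≤ (δ - 1) / (2 * δ)) (hx : 0 ≤ x) :
    ((if 2 / (δ + 1) ≤ x then 1 else 0)
      + (if 1 / δ ≤ x ∧ x < 2 / (δ + 1) then 1 - (1 - (1 - ε) * δ * x) ^ k else 0)
      + if 0 < x ∧ x < 1 / δ then (1 - ε ^ k) * δ * x else 0)
      ≤ (1 - ε ^ k) * δ * x := by
  have hδ0 : 0 < δ := by linarith
  have hcuts : 1 / δ ≤ 2 / (δ + 1) := by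
    rw [div_le_div_iff₀ hδ0 (by linarith)]
    linarith
  have hc : 0 ≤ (1 - ε ^ k) * δ * x := by
    have hεk1 : ε ^ k ≤ 1 := hεk.trans ((div_le_one (by positivity)).2 (by linarith))
    exact mul_nonneg (mul_nonneg (sub_nonneg.2 hεk1) hδ0.le) hx
  rcases lt_or_ge x (1 / δ) with hsmall | hlo
  · rw [if_neg (by linarith), if_neg (by intro h; linarith [h.1]), zero_add, zero_add]
    split_ifs <;> linarith
  rcases lt_or_ge x (2 / (δ + 1)) with hhi | hlarge
  · rw [if_neg (by linarith), if_pos ⟨hlo, hhi⟩, if_neg (by intro h; linarith [h.2])]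
    simpa using one_sub_pow_le_of_mem_Ico hδ0 hε1 hε hlo hhi
  · rw [if_pos hlarge, if_neg (by intro h; linarith [h.2]), if_neg (by intro h; linarith [h.2])]
    simpa using one_le_mul_of_two_div_le hδ hεk hlarge

end Rounding

/-- Deterministic form of the bound `𝔼[X] ≤ (1-ε^k)·δ·Opt*`. -/
theorem stmt_7 (δ : ℝ) (hδ : 2 ≤ δ) (k : ℕ) (hk : 2 ≤ k)
    (ε : ℝ) (hε1 : (δ - 1) / (2 * δ) ≤ ε)
    (hε2 : ε ≤ ((δ - 1) / (2 * δ)) ^ ((1 : ℝ) / k))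
    (m : ℕ) (x : Fin m → ℝ) (hx : ∀ j, x j ∈ Set.Icc (0 : ℝ) 1) :
    ((Finset.univ.filter (fun j : Fin m => 2 / (δ + 1) ≤ x j)).card : ℝ)
      + (∑ j ∈ Finset.univ.filter
            (fun j : Fin m => 1 / δ ≤ x j ∧ x j < 2 / (δ + 1)),
          (1 - (1 - (1 - ε) * δ * x j) ^ k))
      + (∑ j ∈ Finset.univ.filter
            (fun j : Fin m => 0 < x j ∧ x j < 1 / δ),
          (1 - ε ^ k) * δ * x j)
      ≤ (1 - ε ^ k) * δ * ∑ j, x j := by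
  have hb : 0 ≤ (δ - 1) / (2 * δ) := div_nonneg (by linarith) (by linarith)
  have hb1 : (δ - 1) / (2 * δ) ≤ 1 := (div_le_one (by linarith)).2 (by linarith)
  have hε0 : 0 ≤ ε := hb.trans hε1
  have hεk : ε ^ k ≤ (δ - 1) / (2 * δ) := pow_le_of_le_rpow_one_div (by omega) hε0 hb hε2
  have hε : ε ≤ 1 := (pow_le_one_iff_of_nonneg hε0 (by omega)).1 (hεk.trans hb1)
  simp only [sum_filter, natCast_card_filter, mul_sum, ← sum_add_distrib]
  exact sum_le_sum fun j _ => rounding_contribution_le (by linarith) hε1 hε hεk (hx j).1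
end

section
/- Let k ≥ 1 and b ≥ 1 be integers. Consider the hypergraph H_k with vertex set V = (ℤ/2ℤ)^k ∖ {0} and edge set {E_v : v ∈ V}, where E_v := {u ∈ V : ⟨v,u⟩ = 1}. Assigning the constant weight x_v := 2b/(2^k − 1) to every edge E_v yields a feasible fractional set multicover with requirement b: for every vertex u ∈ V, ∑_{v : u ∈ E_v} x_v ≥ b; moreover the total weight is ∑_{v ∈ V} x_v = 2b. In particular, the optimal fractional value Opt* of the multicover LP on H_k satisfies Opt* ≤ 2b. -/
lemma aux_card_dot_one {k : ℕ} (u : Fin k → ZMod 2) (hu : u ≠ 0) :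
    (Finset.univ.filter (fun v : Fin k → ZMod 2 => ∑ i, v i * u i = 1)).card
      = 2 ^ (k - 1) := by
  obtain ⟨i₀, hi₀⟩ := Function.ne_iff.mp hu
  have hui₀ : u i₀ = 1 := by
    simp only [Pi.zero_apply] at hi₀
    revert hi₀; generalize u i₀ = x; revert x; decide
  set w : Fin k → ZMod 2 := Pi.single i₀ 1 with hw
  have hfw : ∑ i, w i * u i = 1 := by
    rw [Finset.sum_eq_single i₀]
    · simp [hw, hui₀]
    · intro j _ hj; simp [hw, Pi.single_eq_of_ne hj]
    · simp
  have hkey : ∀ v : Fin k → ZMod 2,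
      ∑ i, (v i + w i) * u i = (∑ i, v i * u i) + 1 := by
    intro v
    rw [← hfw, ← Finset.sum_add_distrib]
    congr 1; ext i; ring
  have hcard : (Finset.univ.filter (fun v : Fin k → ZMod 2 => ∑ i, v i * u i = 1)).card
      = (Finset.univ.filter (fun v : Fin k → ZMod 2 => ∑ i, v i * u i = 0)).card := by
    apply Finset.card_bij' (fun v _ => v + w) (fun v _ => v + w)
    · intro v hv
      simp only [Finset.mem_filter, Finset.mem_univ, true_and, Pi.add_apply] at hv ⊢
      rw [hkey, hv]; decide
    · intro v hv
      simp only [Finset.mem_filter, Finset.mem_univ, true_and, Pi.add_apply] at hv ⊢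
      rw [hkey, hv]; decide
    · intro v _; ext i
      have : w i + w i = 0 := by
        have := ZMod.natCast_self 2
        generalize w i = x; revert x; decide
      simp [add_assoc, this]
    · intro v _; ext i
      have : w i + w i = 0 := by generalize w i = x; revert x; decide
      simp [add_assoc, this]
  have hsplit : (Finset.univ.filter (fun v : Fin k → ZMod 2 => ∑ i, v i * u i = 1)).card
      + (Finset.univ.filter (fun v : Fin k → ZMod 2 => ∑ i, v i * u i = 0)).card
      = 2 ^ k := by
    rw [← Finset.card_union_of_disjoint]
    · have : (Finset.univ.filter (fun v : Fin k → ZMod 2 => ∑ i, v i * u i = 1)) ∪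
          (Finset.univ.filter (fun v : Fin k → ZMod 2 => ∑ i, v i * u i = 0))
          = Finset.univ := by
        ext v
        simp only [Finset.mem_union, Finset.mem_filter, Finset.mem_univ, true_and, iff_true]
        generalize ∑ i, v i * u i = x; revert x; decide
      rw [this, Finset.card_univ]
      simp [Fintype.card_fun]
    · rw [Finset.disjoint_filter]
      intro v _ h1 h0
      rw [h1] at h0; exact one_ne_zero h0
  have hk1 : 1 ≤ k := by
    rcases Nat.eq_zero_or_pos k with h | h
    · subst h; exact absurd (funext fun i => i.elim0) hu
    · exact h
  rw [← hcard] at hsplit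
  have hpow : 2 ^ k = 2 * 2 ^ (k - 1) := by
    rw [← pow_succ', Nat.sub_add_cancel hk1]
  rw [hpow, ← two_mul] at hsplit
  exact Nat.eq_of_mul_eq_mul_left (by norm_num) hsplit

/-- Constant weight `2b/(2^k-1)` on every edge `E_v` of the hypergraph `H_k`
covers every vertex at least `b` times, and has total weight `2b`. -/
theorem stmt_13 (k b : ℕ) (hk : 1 ≤ k) (hb : 1 ≤ b) :
    (∀ u : Fin k → ZMod 2, u ≠ 0 →
      (b : ℝ) ≤ ∑ _v ∈ Finset.univ.filter
          (fun v : Fin k → ZMod 2 => v ≠ 0 ∧ ∑ i, v i * u i = 1),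
          (2 * (b : ℝ) / ((2 ^ k - 1 : ℕ) : ℝ))) ∧
    (∑ _v ∈ Finset.univ.filter (fun v : Fin k → ZMod 2 => v ≠ 0),
        (2 * (b : ℝ) / ((2 ^ k - 1 : ℕ) : ℝ))) = 2 * (b : ℝ) := by
  have h2k : (2:ℕ) ≤ 2 ^ k := by
    calc (2:ℕ) = 2 ^ 1 := rfl
    _ ≤ 2 ^ k := Nat.pow_le_pow_right (by norm_num) hk
  have hcast : ((2 ^ k - 1 : ℕ) : ℝ) = 2 ^ k - 1 := by
    push_cast [Nat.cast_sub (by omega : 1 ≤ 2 ^ k)]; ring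
  have hpos : (0:ℝ) < ((2 ^ k - 1 : ℕ) : ℝ) := by
    rw [hcast]
    have : (2:ℝ) ≤ 2 ^ k := by
      calc (2:ℝ) = ((2:ℕ):ℝ) := by norm_num
      _ ≤ ((2^k : ℕ) : ℝ) := by exact_mod_cast h2k
      _ = 2 ^ k := by push_cast; ring
    linarith
  constructor
  · intro u hu
    have hfilter : Finset.univ.filter
        (fun v : Fin k → ZMod 2 => v ≠ 0 ∧ ∑ i, v i * u i = 1)
        = Finset.univ.filter (fun v : Fin k → ZMod 2 => ∑ i, v i * u i = 1) := by
      ext v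
      simp only [Finset.mem_filter, Finset.mem_univ, true_and, and_iff_right_iff_imp]
      intro h hv0
      rw [hv0] at h
      simp at h
    rw [hfilter, Finset.sum_const, aux_card_dot_one u hu, nsmul_eq_mul]
    rw [div_eq_mul_inv, ← mul_assoc, ← div_eq_mul_inv, le_div_iff₀ hpos, hcast]
    have h2 : ((2:ℝ) ^ (k-1)) * 2 = 2 ^ k := by
      rw [← pow_succ]
      congr 1
      omega
    have hbr : (0:ℝ) ≤ (b:ℝ) := Nat.cast_nonneg b
    have : ((2:ℝ)^(k-1) : ℝ) * (2 * b) = 2^k * b := by rw [← h2]; ring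
    push_cast
    rw [this]
    nlinarith [pow_pos (by norm_num : (0:ℝ) < 2) k]
  · have hcardne : (Finset.univ.filter (fun v : Fin k → ZMod 2 => v ≠ 0)).card
        = 2 ^ k - 1 := by
      rw [Finset.filter_ne']
      rw [Finset.card_erase_of_mem (Finset.mem_univ _), Finset.card_univ]
      simp [Fintype.card_fun]
    rw [Finset.sum_const, hcardne, nsmul_eq_mul, mul_comm,
      div_mul_cancel₀ _ (ne_of_gt hpos)]
end

section
/- Let k ≥ 1 and b ≥ 1 be integers, and let H_k be the hypergraph with vertex set V = (ℤ/2ℤ)^k ∖ {0} (so n := |V| = 2^k − 1) and edges E_v := {u ∈ V : ⟨v,u⟩ = 1} for v ∈ V. Then every set multicover C ⊆ V with requirement b — i.e. every vertex u ∈ V belongs to at least b of the edges E_v with v ∈ C — satisfies |C| ≥ k = log₂(n+1). Combined with the feasible fractional solution of value 2b, the ratio between the optimal integral multicover value Opt and the optimal fractional value Opt* satisfies Opt/Opt* ≥ log₂(n+1)/(2b). -/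
open Finset

lemma aux_cover (k b : ℕ) (hb : 1 ≤ b) (C : Finset (Fin k → ZMod 2))
    (h2 : ∀ u : Fin k → ZMod 2, u ≠ 0 →
      b ≤ (C.filter (fun v => ∑ i, v i * u i = 1)).card) : k ≤ C.card := by
  haveI : Fact (Nat.Prime 2) := ⟨Nat.prime_two⟩
  let ψ : (Fin k → ZMod 2) →ₗ[ZMod 2] (↥C → ZMod 2) :=
    { toFun := fun u v => ∑ i, (v : Fin k → ZMod 2) i * u i
      map_add' := by intro u w; funext v; simp [mul_add, Finset.sum_add_distrib]
      map_smul' := by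
        intro c u; funext v
        simp [Finset.mul_sum, mul_left_comm] }
  have hinj : Function.Injective ψ := by
    refine (injective_iff_map_eq_zero ψ).mpr ?_
    intro u hu
    by_contra hne
    have hcard := h2 u hne
    have hpos : 0 < (C.filter (fun v => ∑ i, v i * u i = 1)).card :=
      lt_of_lt_of_le hb hcard
    obtain ⟨v, hv⟩ := Finset.card_pos.mp hpos
    rw [Finset.mem_filter] at hv
    have h0 : ψ u ⟨v, hv.1⟩ = 0 := by rw [hu]; rfl
    simp only [ψ, LinearMap.coe_mk, AddHom.coe_mk] at h0
    rw [hv.2] at h0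
    exact one_ne_zero h0
  have h := LinearMap.finrank_le_finrank_of_injective hinj
  simpa [Module.finrank_pi] using h

lemma aux_count_s15 (k : ℕ) (u : Fin k → ZMod 2) (hu : u ≠ 0) :
    (Finset.univ.filter (fun v : Fin k → ZMod 2 => ∑ i, v i * u i = 1)).card
      = 2 ^ (k - 1) := by
  obtain ⟨i, hi⟩ : ∃ i, u i ≠ 0 := by
    by_contra h; push_neg at h; exact hu (funext h)
  have hui : u i = 1 := by
    revert hi; generalize u i = a; revert a; decide
  obtain ⟨v₀, hv₀⟩ : ∃ v₀ : Fin k → ZMod 2, ∑ j, v₀ j * u j = 1 :=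
    ⟨Pi.single i 1, by simp [Pi.single_apply, Finset.sum_ite_eq', hui]⟩
  have key : ∀ v : Fin k → ZMod 2, ∑ j, (v + v₀) j * u j = (∑ j, v j * u j) + 1 := by
    intro v
    rw [← hv₀, ← Finset.sum_add_distrib]
    simp [add_mul]
  have haa : ∀ a : ZMod 2, a + a = 0 := by decide
  have hflip : ∀ a : ZMod 2, a + 1 = 1 ↔ a = 0 := by decide
  have hflip2 : ∀ a : ZMod 2, ¬ a = 1 ↔ a = 0 := by decide
  have hc : (Finset.univ.filter (fun v : Fin k → ZMod 2 => ∑ i, v i * u i = 1)).card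
      = (Finset.univ.filter (fun v : Fin k → ZMod 2 => ¬ (∑ i, v i * u i = 1))).card := by
    apply Finset.card_bij' (fun v _ => v + v₀) (fun v _ => v + v₀)
    · intro v hv
      rw [Finset.mem_filter] at hv ⊢
      refine ⟨Finset.mem_univ _, ?_⟩
      rw [key, hv.2, hflip2, haa]
    · intro v hv
      rw [Finset.mem_filter] at hv ⊢
      refine ⟨Finset.mem_univ _, ?_⟩
      rw [key]
      rw [hflip2] at hv
      rw [hv.2, zero_add]
    · intro v _; funext j; simp [add_assoc, haa]
    · intro v _; funext j; simp [add_assoc, haa]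
  have hsplit : (Finset.univ.filter (fun v : Fin k → ZMod 2 => ∑ i, v i * u i = 1)).card
      + (Finset.univ.filter (fun v : Fin k → ZMod 2 => ¬ (∑ i, v i * u i = 1))).card
      = 2 ^ k := by
    classical
    rw [Finset.card_filter_add_card_filter_not]
    simp [Fintype.card_fun]
  have hk1 : 1 ≤ k := i.pos
  have h2k : 2 ^ k = 2 ^ (k - 1) + 2 ^ (k - 1) := by
    have hkk : k - 1 + 1 = k := Nat.succ_pred_eq_of_pos hk1
    calc 2 ^ k = 2 ^ (k - 1 + 1) := by rw [hkk]
      _ = 2 ^ (k - 1) * 2 := pow_succ 2 (k - 1)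
      _ = 2 ^ (k - 1) + 2 ^ (k - 1) := by ring
  rw [← hc, h2k, ← two_mul, ← two_mul] at hsplit
  exact Nat.eq_of_mul_eq_mul_left two_pos hsplit

lemma aux_log (k : ℕ) : Real.logb 2 (((2 ^ k - 1 : ℕ) : ℝ) + 1) = k := by
  have h1 : (1:ℕ) ≤ 2 ^ k := Nat.one_le_two_pow
  have hcast : ((2 ^ k - 1 : ℕ) : ℝ) + 1 = (2:ℝ) ^ k := by
    push_cast [h1]
    ring
  rw [hcast, Real.logb, Real.log_pow]
  have h2 : Real.log 2 ≠ 0 := ne_of_gt (Real.log_pos (by norm_num))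
  field_simp

lemma aux_filter_eq (k : ℕ) (u : Fin k → ZMod 2) :
    (Finset.univ.filter (fun v : Fin k → ZMod 2 => v ≠ 0 ∧ ∑ i, v i * u i = 1))
      = Finset.univ.filter (fun v : Fin k → ZMod 2 => ∑ i, v i * u i = 1) := by
  ext v
  simp only [Finset.mem_filter, Finset.mem_univ, true_and]
  constructor
  · exact fun h => h.2
  · intro h
    refine ⟨?_, h⟩
    rintro rfl
    simp at h

lemma aux_card_ne (k : ℕ) :
    (Finset.univ.filter (fun v : Fin k → ZMod 2 => v ≠ 0)).card = 2 ^ k - 1 := by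
  rw [Finset.filter_ne' Finset.univ 0, Finset.card_erase_of_mem (Finset.mem_univ _)]
  simp [Fintype.card_fun]


/-- Every set multicover with requirement `b` of the hypergraph `H_k` has at
least `k = log₂(n+1)` edges, and the ratio of the optimal integral value to
the optimal fractional value is at least `log₂(n+1)/(2b)`. -/
theorem stmt_15 (k b : ℕ) (hk : 1 ≤ k) (hb : 1 ≤ b) :
    (∀ C : Finset (Fin k → ZMod 2), (∀ v ∈ C, v ≠ 0) →
      (∀ u : Fin k → ZMod 2, u ≠ 0 →
        b ≤ (C.filter (fun v => ∑ i, v i * u i = 1)).card) →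
      k ≤ C.card ∧ (k : ℝ) = Real.logb 2 (((2 ^ k - 1 : ℕ) : ℝ) + 1)) ∧
    (∀ Opt OptStar : ℝ,
      IsLeast {c : ℝ | ∃ C : Finset (Fin k → ZMod 2),
        (∀ v ∈ C, v ≠ 0) ∧
        (∀ u : Fin k → ZMod 2, u ≠ 0 →
          b ≤ (C.filter (fun v => ∑ i, v i * u i = 1)).card) ∧
        c = C.card} Opt →
      IsLeast {c : ℝ | ∃ x : (Fin k → ZMod 2) → ℝ,
        (∀ v, x v ∈ Set.Icc (0 : ℝ) 1) ∧
        (∀ u : Fin k → ZMod 2, u ≠ 0 →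
          (b : ℝ) ≤ ∑ v ∈ Finset.univ.filter
            (fun v : Fin k → ZMod 2 => v ≠ 0 ∧ ∑ i, v i * u i = 1), x v) ∧
        c = ∑ v ∈ Finset.univ.filter
            (fun v : Fin k → ZMod 2 => v ≠ 0), x v} OptStar →
      Real.logb 2 (((2 ^ k - 1 : ℕ) : ℝ) + 1) / (2 * b) ≤ Opt / OptStar) := by
  constructor
  · intro C h1 h2
    exact ⟨aux_cover k b hb C h2, (aux_log k).symm⟩
  · intro Opt OptStar hO hOS
    obtain ⟨⟨C, hC1, hC2, hCval⟩, hOlb⟩ := hO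
    obtain ⟨⟨x, hx01, hxfeas, hxval⟩, hOSlb⟩ := hOS
    rw [aux_log k]
    -- k ≤ Opt
    have hkO : (k:ℝ) ≤ Opt := by
      rw [hCval]; exact_mod_cast aux_cover k b hb C hC2
    -- a nonzero vertex u₀
    have hu₀ : (Pi.single (⟨0, hk⟩ : Fin k) (1 : ZMod 2) : Fin k → ZMod 2) ≠ 0 := by
      intro h
      have h2 := congrFun h ⟨0, hk⟩
      simp at h2
    set u₀ : Fin k → ZMod 2 := Pi.single (⟨0, hk⟩ : Fin k) 1 with hu₀def
    -- b ≤ 2^(k-1)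
    have hble : (b:ℝ) ≤ (2:ℝ) ^ (k-1) := by
      have h1 := hxfeas u₀ hu₀
      rw [aux_filter_eq] at h1
      have h2 : ∑ v ∈ Finset.univ.filter
            (fun v : Fin k → ZMod 2 => ∑ i, v i * u₀ i = 1), x v
          ≤ ((2 ^ (k-1) : ℕ)) • (1:ℝ) := by
        rw [← aux_count_s15 k u₀ hu₀]
        exact Finset.sum_le_card_nsmul _ _ 1 (fun v _ => (hx01 v).2)
      have h3 := h1.trans h2
      rw [nsmul_eq_mul, mul_one] at h3
      push_cast at h3
      exact h3
    have hpow : (0:ℝ) < (2:ℝ) ^ (k-1) := by positivity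
    -- OptStar ≥ b > 0
    have hbR : (1:ℝ) ≤ (b:ℝ) := by exact_mod_cast hb
    have hOSb : (b:ℝ) ≤ OptStar := by
      rw [hxval]
      refine (hxfeas u₀ hu₀).trans ?_
      apply Finset.sum_le_sum_of_subset_of_nonneg
      · intro v hv
        rw [Finset.mem_filter] at hv ⊢
        exact ⟨hv.1, hv.2.1⟩
      · exact fun v _ _ => (hx01 v).1
    have hOSpos : 0 < OptStar := lt_of_lt_of_le (by linarith) hOSb
    -- OptStar ≤ 2 b via the constant fractional solution
    have hub : OptStar ≤ ((2 ^ k - 1 : ℕ):ℝ) * ((b:ℝ) / 2 ^ (k-1)) := by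
      apply hOSlb
      refine ⟨fun _ => (b:ℝ) / 2 ^ (k-1), ?_, ?_, ?_⟩
      · intro v
        constructor
        · positivity
        · rw [div_le_one hpow]; exact hble
      · intro u hu
        rw [aux_filter_eq, Finset.sum_const, aux_count_s15 k u hu, nsmul_eq_mul]
        have hcc : ((2 ^ (k-1) : ℕ):ℝ) * ((b:ℝ) / 2 ^ (k-1)) = b := by
          push_cast
          field_simp
        rw [hcc]
      · rw [Finset.sum_const, aux_card_ne k, nsmul_eq_mul]
    have h2b : ((2 ^ k - 1 : ℕ):ℝ) * ((b:ℝ) / 2 ^ (k-1)) ≤ 2 * b := by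
      have hcast : ((2 ^ k - 1 : ℕ):ℝ) = (2:ℝ) ^ k - 1 := by
        push_cast [Nat.one_le_two_pow]; ring
      have hkk : (2:ℝ) ^ k = 2 * 2 ^ (k - 1) := by
        rw [← pow_succ']
        congr 1
        omega
      rw [hcast, div_eq_mul_inv]
      rw [← sub_nonneg]
      have hb0 : (0:ℝ) ≤ (b:ℝ) := by linarith
      have key : 2 * (b:ℝ) - ((2:ℝ) ^ k - 1) * ((b:ℝ) * ((2:ℝ) ^ (k-1))⁻¹)
          = (b:ℝ) * ((2:ℝ) ^ (k-1))⁻¹ := by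
        field_simp
        rw [hkk]; ring
      rw [key]
      positivity
    have hOS2b : OptStar ≤ 2 * b := hub.trans h2b
    have hOpos : (0:ℝ) ≤ Opt := le_trans (by positivity) hkO
    exact div_le_div₀ hOpos hkO hOSpos hOS2b
end
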